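/- arXiv:1704.03451 — 5 statements merged into one kernel-verified Lean document; each statement's English description precedes it below -/
import Mathlib

section
/- For every integer n ≥ 2, with P(x) = x + x^2, the quantity A(n,P) = sup_{λ > 0} ( (2 − (n/(n−1)) e^{−λ} (2 + λ)) / λ ) satisfies A(n,P) ≥ 1 − 2 n^{−2/3}. -/
/-!
Let `g(x) = e^{-x} (2 + x)` and `c = n/(n-1) ≥ 1`. Comparing derivatives at `0` gives
`2 - x ≤ g(x) ≤ 2 - x + x³/6` for `x ≥ 0`. The lower bound caps every quotient
`(2 - c g(λ))/λ` at `1`, so the set is bounded above and its supremum dominates each member.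
The upper bound at `λ = 2u`, `u = n^{-1/3}`, together with `n u³ = 1`, reduces
`(2 - c g(2u))/(2u) ≥ 1 - 2u²` to the elementary `0 ≤ 2/3 + 2u - 4u³` for `u³ ≤ 1/2`.
-/

open Real Set

lemma nonneg_of_hasDerivAt_of_nonneg {f f' : ℝ → ℝ} (hf : ∀ x, HasDerivAt f (f' x) x)
    (h0 : 0 ≤ f 0) (hf' : ∀ x, 0 < x → 0 ≤ f' x) {x : ℝ} (hx : 0 ≤ x) : 0 ≤ f x := by
  have hmono : MonotoneOn f (Ici 0) := by
    refine monotoneOn_of_hasDerivWithinAt_nonneg (convex_Ici 0)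
      (fun y _ => (hf y).continuousAt.continuousWithinAt)
      (fun y _ => (hf y).hasDerivWithinAt) fun y hy => hf' y ?_
    simpa using hy
  exact h0.trans (hmono self_mem_Ici hx hx)

lemma hasDerivAt_exp_neg_mul_add (a x : ℝ) :
    HasDerivAt (fun t => exp (-t) * (a + t)) (exp (-x) * (1 - a - x)) x :=
  ((hasDerivAt_neg x).exp.fun_mul ((hasDerivAt_id' x).const_add a)).congr_deriv (by ring)

lemma two_sub_le_exp_neg_mul_two_add {x : ℝ} (hx : 0 ≤ x) : 2 - x ≤ exp (-x) * (2 + x) := by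
  have key := nonneg_of_hasDerivAt_of_nonneg
    (fun t => ((hasDerivAt_exp_neg_mul_add 2 t).sub_const 2).add (hasDerivAt_id t))
    (by simp) (fun t _ => ?_) hx
  · simp only [Pi.add_apply, id] at key
    linarith
  · have : exp (-t) * (1 + t) ≤ 1 := by
      calc exp (-t) * (1 + t) ≤ exp (-t) * exp t := by
            gcongr; linarith [add_one_le_exp t]
        _ = 1 := by rw [← exp_add, neg_add_cancel, exp_zero]
    linarith

lemma one_sub_sq_div_two_le_exp_neg_mul_one_add {x : ℝ} (hx : 0 ≤ x) :
    1 - x ^ 2 / 2 ≤ exp (-x) * (1 + x) := by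
  have key := nonneg_of_hasDerivAt_of_nonneg
    (fun t => ((hasDerivAt_exp_neg_mul_add 1 t).sub_const 1).add ((hasDerivAt_pow 2 t).div_const 2))
    (by simp) (fun t ht => ?_) hx
  · simp only [Pi.add_apply] at key
    linarith
  · have : exp (-t) ≤ 1 := exp_le_one_iff.2 (by linarith)
    push_cast
    nlinarith

lemma exp_neg_mul_two_add_le {x : ℝ} (hx : 0 ≤ x) :
    exp (-x) * (2 + x) ≤ 2 - x + x ^ 3 / 6 := by
  have key := nonneg_of_hasDerivAt_of_nonneg
    (fun t => (((hasDerivAt_id t).const_sub 2).add ((hasDerivAt_pow 3 t).div_const 6)).sub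
      (hasDerivAt_exp_neg_mul_add 2 t))
    (by simp) (fun t ht => ?_) hx
  · simp only [Pi.add_apply, Pi.sub_apply, id] at key
    linarith
  · have := one_sub_sq_div_two_le_exp_neg_mul_one_add ht.le
    push_cast
    nlinarith

lemma bddAbove_quotients {c : ℝ} (hc : 1 ≤ c) :
    BddAbove {x : ℝ | ∃ l : ℝ, 0 < l ∧ x = (2 - c * exp (-l) * (2 + l)) / l} := by
  refine ⟨1, ?_⟩
  rintro _ ⟨l, hl, rfl⟩
  have hlow := two_sub_le_exp_neg_mul_two_add hl.le
  have hpos : 0 ≤ exp (-l) * (2 + l) := by positivity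
  rw [div_le_one hl]
  nlinarith

lemma one_sub_two_mul_sq_le_quotient {N u : ℝ} (hN : 2 ≤ N) (hu : 0 < u) (hNu : N * u ^ 3 = 1) :
    1 - 2 * u ^ 2 ≤ (2 - N / (N - 1) * exp (-(2 * u)) * (2 + 2 * u)) / (2 * u) := by
  have hN1 : 0 < N - 1 := by linarith
  have hup := exp_neg_mul_two_add_le (by positivity : 0 ≤ 2 * u)
  have hcube : u ^ 3 ≤ 1 / 2 := by nlinarith
  have key : N * (2 - 2 * u + (2 * u) ^ 3 / 6) ≤ (N - 1) * (2 - (1 - 2 * u ^ 2) * (2 * u)) := by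
    nlinarith [sq_nonneg (u - 2 / 3), mul_pos hu hu]
  have hbound : N * (exp (-(2 * u)) * (2 + 2 * u)) / (N - 1) ≤ 2 - (1 - 2 * u ^ 2) * (2 * u) := by
    rw [div_le_iff₀ hN1]
    calc N * (exp (-(2 * u)) * (2 + 2 * u)) ≤ N * (2 - 2 * u + (2 * u) ^ 3 / 6) := by gcongr
      _ ≤ _ := by linarith
  rw [le_div_iff₀ (by positivity), mul_assoc, div_mul_eq_mul_div]
  linarith

theorem A_lower_bound_quadratic_poly (n : ℕ) (hn : 2 ≤ n) :
    1 - 2 * (n : ℝ) ^ (-(2 / 3 : ℝ)) ≤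
      sSup {x : ℝ | ∃ l : ℝ, 0 < l ∧
        x = (2 - ((n : ℝ) / ((n : ℝ) - 1)) * Real.exp (-l) * (2 + l)) / l} := by
  have hN : (2 : ℝ) ≤ n := by exact_mod_cast hn
  have hN0 : (0 : ℝ) ≤ n := by linarith
  set u := (n : ℝ) ^ (-(1 / 3 : ℝ))
  have hu : 0 < u := by positivity
  have hsq : (n : ℝ) ^ (-(2 / 3 : ℝ)) = u ^ 2 := by
    rw [← rpow_natCast, ← rpow_mul hN0]
    norm_num
  have hcube : (n : ℝ) * u ^ 3 = 1 := by
    rw [← rpow_natCast, ← rpow_mul hN0]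
    norm_num [rpow_neg_one]
    field_simp
  have hc : 1 ≤ (n : ℝ) / ((n : ℝ) - 1) := by
    rw [one_le_div (by linarith)]
    linarith
  rw [hsq]
  exact (one_sub_two_mul_sq_le_quotient hN hu hcube).trans
    (le_csSup (bddAbove_quotients hc) ⟨2 * u, by positivity, rfl⟩)
end

section
/- The polynomial P(x) = x + x^2 + (2/3)x^3 is admissible: P(0) = 0, P'(0) = 1, its coefficients are nonnegative, and Re(P(1/z)) ≥ 0 for every complex number z with Re(z) ≥ 1. -/
/-!
Write `w = 1/z`. Inversion maps the half-plane `1 ≤ Re z` into the disc `|w|² ≤ Re w`.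
With `u = Re w` and `r = |w|²`, eliminating `(Im w)²` gives
`Re (w + w² + ⅔ w³) = u + 2u² + (8/3)u³ - (1 + 2u) r`, and `r ≤ u` leaves `(8/3)u³ ≥ 0`.
-/

open Polynomial

namespace Complex

theorem normSq_inv_le_re_inv {z : ℂ} (hz : 1 ≤ z.re) : normSq z⁻¹ ≤ z⁻¹.re := by
  have hpos : 0 < normSq z := normSq_pos.mpr (by rintro rfl; simp at hz; linarith)
  rw [normSq_inv, inv_re, inv_eq_one_div]
  gcongr

theorem re_add_sq_add_cube_nonneg {w : ℂ} (hw : normSq w ≤ w.re) :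
    0 ≤ (w + w ^ 2 + 2 / 3 * w ^ 3).re := by
  have hu : 0 ≤ w.re := (normSq_nonneg w).trans hw
  have hre : (w + w ^ 2 + 2 / 3 * w ^ 3).re =
      w.re + 2 * w.re ^ 2 + 8 / 3 * w.re ^ 3 - (1 + 2 * w.re) * normSq w := by
    simp only [add_re, mul_re, pow_succ, pow_zero, one_mul, normSq_apply, div_ofNat_re,
      div_ofNat_im, re_ofNat, im_ofNat, mul_im]
    ring
  rw [hre]
  linarith [mul_le_mul_of_nonneg_left hw (by linarith : (0 : ℝ) ≤ 1 + 2 * w.re), pow_nonneg hu 3]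

end Complex

theorem cubic_is_admissible :
    (X + X ^ 2 + C (2 / 3) * X ^ 3 : ℝ[X]).eval 0 = 0 ∧
    (X + X ^ 2 + C (2 / 3) * X ^ 3 : ℝ[X]).derivative.eval 0 = 1 ∧
    (∀ k, 0 ≤ (X + X ^ 2 + C (2 / 3) * X ^ 3 : ℝ[X]).coeff k) ∧
    ∀ z : ℂ, 1 ≤ z.re →
      0 ≤ (Polynomial.aeval (1 / z) (X + X ^ 2 + C (2 / 3) * X ^ 3 : ℝ[X]) : ℂ).re := by
  refine ⟨by simp, by simp, fun k => ?_, fun z hz => ?_⟩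
  · simp only [coeff_add, coeff_X, coeff_X_pow, coeff_C_mul]
    split_ifs <;> norm_num
  · have heval : aeval (1 / z) (X + X ^ 2 + C (2 / 3) * X ^ 3 : ℝ[X]) =
        z⁻¹ + z⁻¹ ^ 2 + 2 / 3 * z⁻¹ ^ 3 := by
      simp [aeval_C]
    rw [heval]
    exact Complex.re_add_sq_add_cube_nonneg (Complex.normSq_inv_le_re_inv hz)
end

section
/- Let P be a polynomial with nonnegative real coefficients satisfying P(0) = 0 and P'(0) = 1. If Re(P(1/(1+iy))) ≥ 0 for all real y ≥ 0, then Re(P(1/z)) ≥ 0 for all complex z with Re(z) ≥ 1; i.e., P is admissible. -/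
open Polynomial Complex

/-!
Inversion `z ↦ 1 / z` maps the half-plane `1 ≤ re z` into the closed disc `|w - 1/2| ≤ 1/2`,
and the line `re z = 1` onto the boundary circle minus `0`. As `P` has real coefficients,
`re P(conj w) = re P(w)`, so the hypothesis on the upper half of the line gives `0 ≤ re P` on the
whole circle (at `0` because `P 0 = 0`). The minimum principle for `re P`, i.e. the maximum
modulus principle for `exp (-P)`, carries this into the disc.
-/

open Metric ComplexConjugate

namespace Complex

theorem le_re_of_forall_mem_frontier_le_re {E : Type*} [NormedAddCommGroup E] [NormedSpace ℂ E]
    [Nontrivial E] {f : E → ℂ} {U : Set E} (hU : Bornology.IsBounded U)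
    (hd : DiffContOnCl ℂ f U) {c : ℝ} (hc : ∀ w ∈ frontier U, c ≤ (f w).re) {z : E}
    (hz : z ∈ closure U) : c ≤ (f z).re := by
  have norm_exp_sub (w : E) : ‖exp (c - f w)‖ = Real.exp (c - (f w).re) := by
    simp [norm_exp]
  have hexp : DiffContOnCl ℂ (fun w => exp (c - f w)) U :=
    differentiable_exp.comp_diffContOnCl (diffContOnCl_const.sub hd)
  have key := norm_le_of_forall_mem_frontier_norm_le hU hexp (C := 1) (fun w hw => by
    rw [norm_exp_sub, Real.exp_le_one_iff, sub_nonpos]; exact hc w hw) hz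
  rwa [norm_exp_sub, Real.exp_le_one_iff, sub_nonpos] at key

theorem normSq_sub_half (w : ℂ) : normSq (w - 1 / 2) = normSq w - w.re + 1 / 4 := by
  simp [normSq_apply]; ring

theorem mem_closedBall_half_iff {w : ℂ} :
    w ∈ closedBall (1 / 2 : ℂ) (1 / 2) ↔ normSq w ≤ w.re := by
  rw [mem_closedBall, dist_eq, ← sq_le_sq₀ (norm_nonneg _) (by norm_num), Complex.sq_norm,
    normSq_sub_half]
  constructor <;> intro h <;> linarith

theorem mem_sphere_half_iff {w : ℂ} : w ∈ sphere (1 / 2 : ℂ) (1 / 2) ↔ normSq w = w.re := by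
  rw [mem_sphere, dist_eq, ← sq_eq_sq₀ (norm_nonneg _) (by norm_num), Complex.sq_norm,
    normSq_sub_half]
  constructor <;> intro h <;> linarith

theorem inv_mem_closedBall_half {z : ℂ} (hz : 1 ≤ z.re) :
    z⁻¹ ∈ closedBall (1 / 2 : ℂ) (1 / 2) := by
  have hz0 : 0 < normSq z := normSq_pos.2 (by rintro rfl; norm_num at hz)
  rw [mem_closedBall_half_iff, inv_re, map_inv₀, ← one_div]
  exact div_le_div_of_nonneg_right hz hz0.le

theorem re_inv_eq_one_of_mem_sphere_half {w : ℂ} (hw : w ∈ sphere (1 / 2 : ℂ) (1 / 2))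
    (hw0 : w ≠ 0) : w⁻¹.re = 1 := by
  rw [mem_sphere_half_iff] at hw
  rw [inv_re, hw, div_self (hw ▸ (normSq_pos.2 hw0).ne')]

end Complex

theorem Polynomial.re_aeval_conj (P : ℝ[X]) (w : ℂ) : (aeval (conj w) P).re = (aeval w P).re := by
  rw [aeval_conj, conj_re]

theorem Polynomial.re_aeval_nonneg_of_re_inv_eq_one (P : ℝ[X])
    (hbd : ∀ y : ℝ, 0 ≤ y → 0 ≤ (aeval (1 / (1 + y * I)) P).re) {w : ℂ} (hw : w⁻¹.re = 1) :
    0 ≤ (aeval w P).re := by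
  obtain ⟨y, rfl⟩ : ∃ y : ℝ, w = 1 / (1 + y * I) :=
    ⟨w⁻¹.im, by rw [one_div, ← ofReal_one, ← hw, re_add_im, inv_inv]⟩
  rcases le_total 0 y with hy | hy
  · exact hbd y hy
  · have hconj : conj (1 / (1 + ((-y : ℝ) : ℂ) * I)) = 1 / (1 + y * I) := by simp
    rw [← hconj, re_aeval_conj]
    exact hbd (-y) (neg_nonneg.2 hy)

theorem heath_brown_boundary_criterion_general (P : ℝ[X]) (h0 : P.eval 0 = 0)
    (hbd : ∀ y : ℝ, 0 ≤ y → 0 ≤ (Polynomial.aeval (1 / (1 + y * Complex.I)) P : ℂ).re) :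
    ∀ z : ℂ, 1 ≤ z.re → 0 ≤ (Polynomial.aeval (1 / z) P : ℂ).re := by
  have hsphere : ∀ w ∈ sphere (1 / 2 : ℂ) (1 / 2), 0 ≤ (aeval w P).re := by
    intro w hw
    rcases eq_or_ne w 0 with rfl | hw0
    · rw [← coeff_zero_eq_aeval_zero', coeff_zero_eq_eval_zero, h0, map_zero, zero_re]
    · exact P.re_aeval_nonneg_of_re_inv_eq_one hbd (re_inv_eq_one_of_mem_sphere_half hw hw0)
  intro z hz
  rw [one_div]
  refine le_re_of_forall_mem_frontier_le_re (f := fun w => aeval w P)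
    (U := ball (1 / 2) (1 / 2)) isBounded_ball P.differentiable_aeval.diffContOnCl ?_ ?_
  · rwa [frontier_ball _ (by norm_num)]
  · rw [closure_ball _ (by norm_num)]
    exact inv_mem_closedBall_half hz

theorem heath_brown_boundary_criterion (P : ℝ[X])
    (hcoeff : ∀ k, 0 ≤ P.coeff k) (h0 : P.eval 0 = 0) (h1 : P.derivative.eval 0 = 1)
    (hbd : ∀ y : ℝ, 0 ≤ y → 0 ≤ (Polynomial.aeval (1 / (1 + y * Complex.I)) P : ℂ).re) :
    ∀ z : ℂ, 1 ≤ z.re → 0 ≤ (Polynomial.aeval (1 / z) P : ℂ).re :=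
  heath_brown_boundary_criterion_general P h0 hbd
end

section
/- For a finite extension K/F of number fields, the set of prime ideals of F which ramify in K satisfies ∑_{v ramified} log N^F_ℚ(𝔭_v) ≤ log D_K, where D_K = |disc(K/ℚ)|. -/
/-!
Choose for every ramified prime `p` of `F` a prime `P` of `K` above it with `e(P | p) ≥ 2`.
Then `P²` divides `p 𝓞_K`, hence also `(P ∩ ℤ) 𝓞_K`, so `P` divides the absolute different
`𝔇_K`. Distinct `p` give distinct `P`, and `N(p) ≤ N(P)`, so
`∏ N(p) ≤ ∏ N(P) ≤ N(𝔇_K) = |d_K|`.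
-/

open NumberField

namespace NumberField

variable {K : Type*} [Field K] [NumberField K]

theorem dvd_differentIdeal_of_map_under_le_sq {R : Type*} [CommRing R] [Algebra R (𝓞 K)]
    {P : Ideal (𝓞 K)} [P.IsPrime] (hP : P ≠ ⊥)
    (h : (P.under R).map (algebraMap R (𝓞 K)) ≤ P ^ 2) :
    P ∣ differentIdeal ℤ (𝓞 K) := by
  have hq : P.under ℤ ≠ ⊥ := Ideal.under_ne_bot ℤ hP
  have : (P.under ℤ).IsMaximal := Ideal.IsPrime.isMaximal inferInstance hq
  have hle : (P.under ℤ).map (algebraMap ℤ (𝓞 K)) ≤ (P.under R).map (algebraMap R (𝓞 K)) := by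
    rw [IsScalarTower.algebraMap_eq ℤ R (𝓞 K), ← Ideal.map_map, ← Ideal.under_under (B := R)]
    exact Ideal.map_mono Ideal.map_comap_le
  simpa using pow_sub_one_dvd_differentIdeal ℤ P 2 hq (Ideal.dvd_iff_le.mpr (hle.trans h))

end NumberField

namespace Ideal

variable {S : Type*} [CommRing S] [IsDedekindDomain S] [Module.Free ℤ S] [Module.Finite ℤ S]

theorem absNorm_le_absNorm_of_comap_eq {R : Type*} [CommRing R] [IsDedekindDomain R]
    [Module.Free ℤ R] [Module.Finite ℤ R] (f : R →+* S) {p : Ideal R} {P : Ideal S}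
    (hP : P ≠ ⊥) (h : P.comap f = p) :
    absNorm p ≤ absNorm P := by
  have : Finite (S ⧸ P) := by
    refine Nat.finite_of_card_ne_zero ?_
    simpa [absNorm_apply, Submodule.cardQuot_apply] using absNorm_eq_zero_iff.not.mpr hP
  simpa only [absNorm_apply, Submodule.cardQuot_apply] using
    Nat.card_le_card_of_injective _ (quotientMap_injective' (H := h.ge) h.le)

theorem prod_absNorm_le_absNorm_of_forall_prime_dvd {I : Ideal S} (hI : I ≠ ⊥)
    {s : Finset (Ideal S)} (hprime : ∀ P ∈ s, Prime P) (hdvd : ∀ P ∈ s, P ∣ I) :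
    ∏ P ∈ s, absNorm P ≤ absNorm I := by
  rw [← map_prod]
  exact Nat.le_of_dvd (Nat.pos_of_ne_zero (absNorm_eq_zero_iff.not.mpr hI))
    (map_dvd absNorm (s.prod_primes_dvd I hprime hdvd))

end Ideal

theorem Real.sum_log_natCast_le_log_of_prod_le {ι : Type*} {s : Finset ι} {n : ι → ℕ} {N : ℕ}
    (hn : ∀ i ∈ s, n i ≠ 0) (h : ∏ i ∈ s, n i ≤ N) :
    ∑ i ∈ s, Real.log (n i) ≤ Real.log N := by
  rw [← Real.log_prod fun i hi => Nat.cast_ne_zero.mpr (hn i hi)]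
  exact Real.log_le_log (by exact_mod_cast Nat.pos_of_ne_zero (Finset.prod_ne_zero_iff.mpr hn))
    (by exact_mod_cast h)

open Ideal in
theorem ramified_primes_log_norm_sum_le (F K : Type*) [Field F] [Field K]
    [NumberField F] [NumberField K] [Algebra F K]
    (S : Set (Ideal (𝓞 F)))
    (hS : S = {p : Ideal (𝓞 F) | p.IsPrime ∧ p ≠ ⊥ ∧
      ∃ P : Ideal (𝓞 K), P.IsPrime ∧ P ≠ ⊥ ∧
        Ideal.comap (algebraMap (𝓞 F) (𝓞 K)) P = p ∧
        2 ≤ Ideal.ramificationIdx' p P})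
    (hfin : S.Finite) :
    ∑ p ∈ hfin.toFinset, Real.log (Ideal.absNorm p) ≤
      Real.log ((NumberField.discr K).natAbs : ℝ) := by
  classical
  subst hS
  set T := hfin.toFinset
  have hT : ∀ p ∈ T, p ≠ ⊥ := fun p hp => (hfin.mem_toFinset.mp hp).2.1
  have hram : ∀ p ∈ T, ∃ P : Ideal (𝓞 K),
      Prime P ∧ P ∣ differentIdeal ℤ (𝓞 K) ∧ P.comap (algebraMap (𝓞 F) (𝓞 K)) = p := by
    intro p hp
    obtain ⟨-, -, P, hP, hP0, rfl, he⟩ := hfin.mem_toFinset.mp hp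
    exact ⟨P, (prime_iff_isPrime hP0).mpr hP,
      dvd_differentIdeal_of_map_under_le_sq hP0 (le_pow_of_le_ramificationIdx' he), rfl⟩
  choose! f hf using hram
  have hinj : Set.InjOn f T := fun p hp q hq hpq => by
    rw [← (hf p hp).2.2, ← (hf q hq).2.2, hpq]
  refine Real.sum_log_natCast_le_log_of_prod_le
    (fun p hp => absNorm_eq_zero_iff.not.mpr (hT p hp)) ?_
  calc ∏ p ∈ T, absNorm p
      ≤ ∏ p ∈ T, absNorm (f p) := Finset.prod_le_prod' fun p hp =>
        absNorm_le_absNorm_of_comap_eq _ (hf p hp).1.ne_zero (hf p hp).2.2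
    _ = ∏ P ∈ T.image f, absNorm P := (Finset.prod_image hinj).symm
    _ ≤ absNorm (differentIdeal ℤ (𝓞 K)) := by
        refine prod_absNorm_le_absNorm_of_forall_prime_dvd differentIdeal_ne_bot ?_ ?_
        · exact Finset.forall_mem_image.mpr fun p hp => (hf p hp).1
        · exact Finset.forall_mem_image.mpr fun p hp => (hf p hp).2.1
    _ = (discr K).natAbs := absNorm_differentIdeal K (𝓞 K)
end

section
/- The function A(n) = sup_{λ>0} (1 − (n/(n−1)) e^{−λ})/λ satisfies A(n) ≥ 1 − √(2/(n−1)) for every integer n ≥ 2. -/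
/-!
Take `λ = s := √(2/(n-1))`, so that `n/(n-1) = 1 + s²/2`. Then `e^s ≥ 1 + s + s²/2` gives
`(1 + s²/2) e^{-s} ≤ 1 - s + s²`, i.e. the quotient at `λ = s` is at least `1 - s`.
-/

open Real

lemma bddAbove_one_sub_mul_exp_neg_div {c : ℝ} (hc : 1 ≤ c) :
    BddAbove {x : ℝ | ∃ l : ℝ, 0 < l ∧ x = (1 - c * exp (-l)) / l} := by
  refine ⟨1, ?_⟩
  rintro x ⟨l, hl, rfl⟩
  rw [div_le_one hl]
  nlinarith [one_sub_le_exp_neg l, exp_pos (-l)]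

lemma one_sub_le_one_sub_mul_exp_neg_div {s : ℝ} (hs : 0 < s) :
    1 - s ≤ (1 - (1 + s ^ 2 / 2) * exp (-s)) / s := by
  have hmul_exp : 1 + s ^ 2 / 2 ≤ (1 - s + s ^ 2) * exp s := calc
    1 + s ^ 2 / 2 ≤ (1 - s + s ^ 2) * (1 + s + s ^ 2 / 2) := by
      nlinarith [pow_pos hs 3, pow_pos hs 4]
    _ ≤ (1 - s + s ^ 2) * exp s :=
      mul_le_mul_of_nonneg_left (quadratic_le_exp_of_nonneg hs.le)
        (by nlinarith [sq_nonneg (s - 1)])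
  have hexp : (1 + s ^ 2 / 2) * exp (-s) ≤ 1 - s + s ^ 2 := by
    rw [exp_neg, ← div_eq_mul_inv, div_le_iff₀ (exp_pos s)]
    exact hmul_exp
  rw [le_div_iff₀ hs]
  linarith

theorem A_Li_lower_bound (n : ℕ) (hn : 2 ≤ n) :
    1 - Real.sqrt (2 / ((n : ℝ) - 1)) ≤
      sSup {x : ℝ | ∃ l : ℝ, 0 < l ∧
        x = (1 - ((n : ℝ) / ((n : ℝ) - 1)) * Real.exp (-l)) / l} := by
  have hn1 : (0 : ℝ) < n - 1 := by
    have : (2 : ℝ) ≤ n := by exact_mod_cast hn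
    linarith
  set s := √(2 / ((n : ℝ) - 1))
  have hs : 0 < s := sqrt_pos.2 (by positivity)
  have hc : (n : ℝ) / (n - 1) = 1 + s ^ 2 / 2 := by
    rw [sq_sqrt (by positivity)]
    field_simp
    ring
  rw [hc]
  have hbdd := bddAbove_one_sub_mul_exp_neg_div
    (le_add_of_nonneg_right (by positivity : 0 ≤ s ^ 2 / 2))
  exact (one_sub_le_one_sub_mul_exp_neg_div hs).trans (le_csSup hbdd ⟨s, hs, rfl⟩)
end
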